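/- arXiv:2310.13186 — 10 statements merged into one kernel-verified Lean document; each statement's English description precedes it below -/
import Mathlib

section
/- Suppose f̄ > f_ and ϑ̄ > 0 and 0 < ξ ≤ 1. Define π(x) = -(f(x) + σ(x)) with σ(x) = [ϑ(x) > 0]·(f̄ - f_) + ((f̄ - f_)/(ξ·ϑ̄))·θ(x), where [·] is the indicator and θ(x) = -ϑ̄ if ϑ(x) = 0, θ(x) = ϑ(x) otherwise. If x₁ is feasible (ϑ(x₁) = 0) and x₂ is infeasible (ϑ(x₂) > 0), and f_ ≤ f(x₁), f(x₂) ≤ f̄, then π(x₁) > π(x₂). -/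
theorem stmt_2 {S : Type*} (f ϑ : S → ℝ) (fb fl tb ξ : ℝ)
    (hf : fl < fb) (htb : 0 < tb) (hξ0 : 0 < ξ) (hξ1 : ξ ≤ 1)
    (hlo : ∀ x, 0 ≤ ϑ x) (hhi : ∀ x, ϑ x ≤ tb)
    (θ σ π : S → ℝ)
    (hθ : ∀ x, θ x = if ϑ x = 0 then -tb else ϑ x)
    (hσ : ∀ x, σ x = (if 0 < ϑ x then fb - fl else 0) + ((fb - fl) / (ξ * tb)) * θ x)
    (hπ : ∀ x, π x = -(f x + σ x))
    (x₁ x₂ : S) (h1 : ϑ x₁ = 0) (h2 : 0 < ϑ x₂)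
    (hb1 : fl ≤ f x₁ ∧ f x₁ ≤ fb) (hb2 : fl ≤ f x₂ ∧ f x₂ ≤ fb) :
    π x₁ > π x₂ := by
  have hc : 0 < (fb - fl) / (ξ * tb) := by
    apply div_pos (by linarith) (by positivity)
  have hσ1 : σ x₁ = -((fb - fl) / ξ) := by
    rw [hσ, hθ, h1]
    simp [h1, not_lt.mpr (le_refl (0:ℝ))]
    field_simp
  have hσ2 : σ x₂ = (fb - fl) + ((fb - fl) / (ξ * tb)) * ϑ x₂ := by
    rw [hσ, hθ]
    simp [h2, ne_of_gt h2]
  have hd : fb - fl ≤ (fb - fl) / ξ := by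
    rw [le_div_iff₀ hξ0]; nlinarith
  have hk : 0 < (fb - fl) / (ξ * tb) * ϑ x₂ := mul_pos hc h2
  rw [hπ, hπ, gt_iff_lt, neg_lt_neg_iff, hσ1, hσ2]
  nlinarith [hb1.2, hb2.1]
end

section
/- With π, σ, θ as defined (f_ ≤ f ≤ f̄, f̄ > f_, 0 < ϑ ≤ ϑ̄ for infeasible points, 0 < ξ ≤ 1), if x₁ and x₂ are both infeasible and ϑ(x₁) - ϑ(x₂) < -ξ·ϑ̄, then π(x₁) > π(x₂), regardless of the objective function values f(x₁), f(x₂). -/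
theorem stmt_3 {S : Type*} (f ϑ : S → ℝ) (fb fl tb ξ : ℝ)
    (hf : fl < fb) (htb : 0 < tb) (hξ0 : 0 < ξ) (hξ1 : ξ ≤ 1)
    (hflo : ∀ x, fl ≤ f x) (hfhi : ∀ x, f x ≤ fb)
    (hlo : ∀ x, 0 ≤ ϑ x) (hhi : ∀ x, ϑ x ≤ tb)
    (θ σ π : S → ℝ)
    (hθ : ∀ x, θ x = if ϑ x = 0 then -tb else ϑ x)
    (hσ : ∀ x, σ x = (if 0 < ϑ x then fb - fl else 0) + ((fb - fl) / (ξ * tb)) * θ x)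
    (hπ : ∀ x, π x = -(f x + σ x))
    (x₁ x₂ : S) (h1 : 0 < ϑ x₁) (h2 : 0 < ϑ x₂)
    (hz : ϑ x₁ - ϑ x₂ < -(ξ * tb)) :
    π x₁ > π x₂ := by
  have hc : 0 < ξ * tb := mul_pos hξ0 htb
  have e1 : θ x₁ = ϑ x₁ := by rw [hθ, if_neg (ne_of_gt h1)]
  have e2 : θ x₂ = ϑ x₂ := by rw [hθ, if_neg (ne_of_gt h2)]
  rw [hπ, hπ, hσ, hσ, if_pos h1, if_pos h2, e1, e2]
  have hd : (fb - fl) / (ξ * tb) * (ϑ x₂ - ϑ x₁) > fb - fl := by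
    rw [gt_iff_lt, div_mul_eq_mul_div, lt_div_iff₀ hc]
    nlinarith
  nlinarith [hflo x₂, hfhi x₁]
end

section
/- With π, σ, θ as defined and 0 < η < 1, 0 < ξ ≤ 1, if x₁ and x₂ are both infeasible, z = ϑ(x₁) - ϑ(x₂) satisfies -ξ·ϑ̄ ≤ z < -ξ·η·ϑ̄, and y = f(x₁) - f(x₂) ≤ η·(f̄ - f_), then π(x₁) > π(x₂). -/
theorem stmt_4 {S : Type*} (f ϑ : S → ℝ) (fb fl tb ξ η : ℝ)
    (hf : fl < fb) (htb : 0 < tb) (hξ0 : 0 < ξ) (hξ1 : ξ ≤ 1)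
    (hη0 : 0 < η) (hη1 : η < 1)
    (hflo : ∀ x, fl ≤ f x) (hfhi : ∀ x, f x ≤ fb)
    (hlo : ∀ x, 0 ≤ ϑ x) (hhi : ∀ x, ϑ x ≤ tb)
    (θ σ π : S → ℝ)
    (hθ : ∀ x, θ x = if ϑ x = 0 then -tb else ϑ x)
    (hσ : ∀ x, σ x = (if 0 < ϑ x then fb - fl else 0) + ((fb - fl) / (ξ * tb)) * θ x)
    (hπ : ∀ x, π x = -(f x + σ x))
    (x₁ x₂ : S) (h1 : 0 < ϑ x₁) (h2 : 0 < ϑ x₂)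
    (hz1 : -(ξ * tb) ≤ ϑ x₁ - ϑ x₂) (hz2 : ϑ x₁ - ϑ x₂ < -(ξ * η * tb))
    (hy : f x₁ - f x₂ ≤ η * (fb - fl)) :
    π x₁ > π x₂ := by
  have hc : (0:ℝ) < ξ * tb := by positivity
  have hkey : (fb - fl) / (ξ * tb) * (ξ * tb) = fb - fl := div_mul_cancel₀ _ (ne_of_gt hc)
  have hcpos : (0:ℝ) < (fb - fl) / (ξ * tb) := div_pos (by linarith) hc
  rw [hπ, hπ, hσ, hσ, hθ, hθ, if_pos h1, if_pos h2, if_neg (ne_of_gt h1), if_neg (ne_of_gt h2)]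
  have h3 : (fb - fl) / (ξ * tb) * (ϑ x₁ - ϑ x₂) < (fb - fl) / (ξ * tb) * (-(ξ * η * tb)) :=
    mul_lt_mul_of_pos_left hz2 hcpos
  nlinarith [h3, hkey]
end

section
/- With π, σ, θ as defined, if x₁ and x₂ are both infeasible, z = ϑ(x₁) - ϑ(x₂) satisfies -ξ·η·ϑ̄ ≤ z ≤ 0, y = f(x₁) - f(x₂) ≤ 0, and (z,y) ≠ (0,0), then π(x₁) > π(x₂). -/
theorem stmt_5 {S : Type*} (f ϑ : S → ℝ) (fb fl tb ξ η : ℝ)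
    (hf : fl < fb) (htb : 0 < tb) (hξ0 : 0 < ξ) (hξ1 : ξ ≤ 1)
    (hη0 : 0 < η) (hη1 : η < 1)
    (hflo : ∀ x, fl ≤ f x) (hfhi : ∀ x, f x ≤ fb)
    (hlo : ∀ x, 0 ≤ ϑ x) (hhi : ∀ x, ϑ x ≤ tb)
    (θ σ π : S → ℝ)
    (hθ : ∀ x, θ x = if ϑ x = 0 then -tb else ϑ x)
    (hσ : ∀ x, σ x = (if 0 < ϑ x then fb - fl else 0) + ((fb - fl) / (ξ * tb)) * θ x)
    (hπ : ∀ x, π x = -(f x + σ x))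
    (x₁ x₂ : S) (h1 : 0 < ϑ x₁) (h2 : 0 < ϑ x₂)
    (hz1 : -(ξ * η * tb) ≤ ϑ x₁ - ϑ x₂) (hz2 : ϑ x₁ - ϑ x₂ ≤ 0)
    (hy : f x₁ - f x₂ ≤ 0)
    (hne : (ϑ x₁ - ϑ x₂) + (f x₁ - f x₂) ≠ 0) :
    π x₁ > π x₂ := by
  have hc : 0 < (fb - fl) / (ξ * tb) := div_pos (by linarith) (by positivity)
  rw [hπ x₁, hπ x₂, hσ x₁, hσ x₂, hθ x₁, hθ x₂,
    if_neg h1.ne', if_neg h2.ne', if_pos h1, if_pos h2]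
  have key : (fb - fl) / (ξ * tb) * ϑ x₁ + f x₁ < (fb - fl) / (ξ * tb) * ϑ x₂ + f x₂ := by
    rcases lt_or_eq_of_le hz2 with h | h
    · nlinarith
    · have hy' : f x₁ - f x₂ < 0 := lt_of_le_of_ne hy (by intro h'; apply hne; rw [h, h']; ring)
      nlinarith
  linarith
end

section
/- With π, σ, θ as defined, if x₁ and x₂ are both infeasible, 0 < z ≤ ξ·η·ϑ̄ where z = ϑ(x₁) - ϑ(x₂), and y = f(x₁) - f(x₂) < -η·(f̄ - f_), then π(x₁) > π(x₂). (A sufficiently large advantage in objective value outweighs a small disadvantage in constraint violation.) -/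
theorem stmt_6 {S : Type*} (f ϑ : S → ℝ) (fb fl tb ξ η : ℝ)
    (hf : fl < fb) (htb : 0 < tb) (hξ0 : 0 < ξ) (hξ1 : ξ ≤ 1)
    (hη0 : 0 < η) (hη1 : η < 1)
    (hflo : ∀ x, fl ≤ f x) (hfhi : ∀ x, f x ≤ fb)
    (hlo : ∀ x, 0 ≤ ϑ x) (hhi : ∀ x, ϑ x ≤ tb)
    (θ σ π : S → ℝ)
    (hθ : ∀ x, θ x = if ϑ x = 0 then -tb else ϑ x)
    (hσ : ∀ x, σ x = (if 0 < ϑ x then fb - fl else 0) + ((fb - fl) / (ξ * tb)) * θ x)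
    (hπ : ∀ x, π x = -(f x + σ x))
    (x₁ x₂ : S) (h1 : 0 < ϑ x₁) (h2 : 0 < ϑ x₂)
    (hz1 : 0 < ϑ x₁ - ϑ x₂) (hz2 : ϑ x₁ - ϑ x₂ ≤ ξ * η * tb)
    (hy : f x₁ - f x₂ < -(η * (fb - fl))) :
    π x₁ > π x₂ := by
  have hσ1 := hσ x₁; have hσ2 := hσ x₂
  rw [hθ, if_neg h1.ne', if_pos h1] at hσ1
  rw [hθ, if_neg h2.ne', if_pos h2] at hσ2
  rw [hπ, hπ, hσ1, hσ2]
  have hc : (fb - fl) / (ξ * tb) * (ϑ x₁ - ϑ x₂) ≤ η * (fb - fl) := by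
    rw [div_mul_eq_mul_div, div_le_iff₀ (by positivity)]
    nlinarith [mul_le_mul_of_nonneg_left hz2 (le_of_lt (sub_pos.mpr hf))]
  nlinarith
end

section
/- Equivalence on the line L: let e = ξ·ϑ̄/(f̄ - f_). With π, σ, θ as defined, if x₁ and x₂ have the same feasibility status (both feasible or both infeasible) and z = θ(x₁) - θ(x₂) satisfies z = -e·y where y = f(x₁) - f(x₂), then π(x₁) = π(x₂). -/
theorem stmt_8 {S : Type*} (f ϑ : S → ℝ) (fb fl tb ξ : ℝ)
    (hf : fl < fb) (htb : 0 < tb) (hξ0 : 0 < ξ) (hξ1 : ξ ≤ 1)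
    (hflo : ∀ x, fl ≤ f x) (hfhi : ∀ x, f x ≤ fb)
    (hlo : ∀ x, 0 ≤ ϑ x) (hhi : ∀ x, ϑ x ≤ tb)
    (θ σ π : S → ℝ)
    (hθ : ∀ x, θ x = if ϑ x = 0 then -tb else ϑ x)
    (hσ : ∀ x, σ x = (if 0 < ϑ x then fb - fl else 0) + ((fb - fl) / (ξ * tb)) * θ x)
    (hπ : ∀ x, π x = -(f x + σ x))
    (x₁ x₂ : S) (hsame : (ϑ x₁ = 0 ∧ ϑ x₂ = 0) ∨ (0 < ϑ x₁ ∧ 0 < ϑ x₂))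
    (hline : θ x₁ - θ x₂ = -((ξ * tb / (fb - fl)) * (f x₁ - f x₂))) :
    π x₁ = π x₂ := by
  have hc : (fb - fl) / (ξ * tb) * (θ x₁ - θ x₂) = -(f x₁ - f x₂) := by
    rw [hline]
    have h1 : fb - fl ≠ 0 := by linarith
    have h2 : ξ * tb ≠ 0 := by positivity
    field_simp
  have hind : (if 0 < ϑ x₁ then fb - fl else 0) = (if 0 < ϑ x₂ then fb - fl else 0) := by
    rcases hsame with ⟨h1, h2⟩ | ⟨h1, h2⟩ <;> simp [h1, h2] <;> intro h <;> linarith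
  have := hσ x₁; have := hσ x₂
  rw [hπ x₁, hπ x₂, hσ x₁, hσ x₂, hind]
  nlinarith [hc]
end

section
/- Below-the-line comparison: let e = ξ·ϑ̄/(f̄ - f_). If x₁ and x₂ are both infeasible and z = ϑ(x₁) - ϑ(x₂) satisfies z < -e·y where y = f(x₁) - f(x₂), then π(x₁) > π(x₂). Symmetrically, if z > -e·y then π(x₁) < π(x₂). -/
theorem stmt_9 {S : Type*} (f ϑ : S → ℝ) (fb fl tb ξ : ℝ)
    (hf : fl < fb) (htb : 0 < tb) (hξ0 : 0 < ξ) (hξ1 : ξ ≤ 1)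
    (hflo : ∀ x, fl ≤ f x) (hfhi : ∀ x, f x ≤ fb)
    (hlo : ∀ x, 0 ≤ ϑ x) (hhi : ∀ x, ϑ x ≤ tb)
    (θ σ π : S → ℝ)
    (hθ : ∀ x, θ x = if ϑ x = 0 then -tb else ϑ x)
    (hσ : ∀ x, σ x = (if 0 < ϑ x then fb - fl else 0) + ((fb - fl) / (ξ * tb)) * θ x)
    (hπ : ∀ x, π x = -(f x + σ x))
    (x₁ x₂ : S) (h1 : 0 < ϑ x₁) (h2 : 0 < ϑ x₂) :
    (ϑ x₁ - ϑ x₂ < -((ξ * tb / (fb - fl)) * (f x₁ - f x₂)) → π x₁ > π x₂) ∧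
    (ϑ x₁ - ϑ x₂ > -((ξ * tb / (fb - fl)) * (f x₁ - f x₂)) → π x₁ < π x₂) := by
  have hc : (0:ℝ) < ξ * tb := mul_pos hξ0 htb
  have hd : (0:ℝ) < fb - fl := by linarith
  have e1 : π x₁ = -(f x₁ + ((fb - fl) + ((fb - fl) / (ξ * tb)) * ϑ x₁)) := by
    rw [hπ, hσ, hθ]; simp [h1.ne', h1]
  have e2 : π x₂ = -(f x₂ + ((fb - fl) + ((fb - fl) / (ξ * tb)) * ϑ x₂)) := by
    rw [hπ, hσ, hθ]; simp [h2.ne', h2]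
  have key : (fb - fl) / (ξ * tb) * (ξ * tb / (fb - fl)) = 1 := by
    field_simp
  constructor <;> intro h <;> rw [e1, e2] <;>
    · have h' := mul_lt_mul_of_pos_left h (div_pos hd hc)
      rw [mul_neg, ← mul_assoc, key, one_mul] at h'
      nlinarith
end

section
/- Scale invariance of the comparison (Corollary to Lemmas 2-6): suppose f̂ > 0 and ĝ > 0 satisfy f̂/ĝ = (f̄ - f_)/ϑ̄, and define π̂(x) = -(f(x) + 1{ϑ(x)>0}·f̂ + (f̂/(ξ·ĝ))·θ(x)). Then for all x₁, x₂ ∈ S, sign(π̂(x₁) - π̂(x₂)) = sign(π(x₁) - π(x₂)), where π is the original function built with f̄ - f_ and ϑ̄. -/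
/-!
Both π and π̂ have the form `x ↦ -(f x + d·1{ϑ x > 0} + c·θ x)` with the same slope
`c = (f̄ - f_)/(ξϑ̄) = f̂/(ξĝ)`; they differ only in the bonus `d`. Within each of the classes
`ϑ > 0` and `ϑ = 0` the bonus cancels from differences. Across the classes the comparison is
decided by the class alone whatever `d ≥ 0` is, because `c·ϑ̄ = (f̄ - f_)/ξ ≥ f̄ - f_` exceeds any
difference of values of `f`.
-/

noncomputable def penalized {S : Type*} (f ϑ θ : S → ℝ) (c d : ℝ) (x : S) : ℝ :=
  -(f x + ((if 0 < ϑ x then d else 0) + c * θ x))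

section penalized

variable {S : Type*} {f ϑ θ : S → ℝ} {c : ℝ}

theorem penalized_sub_penalized_of_iff {x₁ x₂ : S} (h : 0 < ϑ x₁ ↔ 0 < ϑ x₂) (d d' : ℝ) :
    penalized f ϑ θ c d x₁ - penalized f ϑ θ c d x₂ =
      penalized f ϑ θ c d' x₁ - penalized f ϑ θ c d' x₂ := by
  unfold penalized
  by_cases h₁ : 0 < ϑ x₁
  · simp only [if_pos h₁, if_pos (h.mp h₁)]; ring
  · simp only [if_neg h₁, if_neg (mt h.mpr h₁)]

theorem penalized_sub_penalized_neg {x₁ x₂ : S} {d : ℝ} (hd : 0 ≤ d)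
    (h₁ : 0 < ϑ x₁) (h₂ : ¬ 0 < ϑ x₂) (hθ : 0 < c * θ x₁) (hgap : f x₂ + c * θ x₂ ≤ f x₁) :
    penalized f ϑ θ c d x₁ - penalized f ϑ θ c d x₂ < 0 := by
  simp only [penalized, if_pos h₁, if_neg h₂]
  linarith

theorem sign_penalized_sub_eq {d d' : ℝ} (hd : 0 ≤ d) (hd' : 0 ≤ d')
    (hθ : ∀ x, 0 < ϑ x → 0 < c * θ x)
    (hgap : ∀ x y, 0 < ϑ x → ¬ 0 < ϑ y → f y + c * θ y ≤ f x) (x₁ x₂ : S) :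
    Real.sign (penalized f ϑ θ c d x₁ - penalized f ϑ θ c d x₂) =
      Real.sign (penalized f ϑ θ c d' x₁ - penalized f ϑ θ c d' x₂) := by
  by_cases h₁ : 0 < ϑ x₁ <;> by_cases h₂ : 0 < ϑ x₂
  · rw [penalized_sub_penalized_of_iff (iff_of_true h₁ h₂)]
  · rw [Real.sign_of_neg (penalized_sub_penalized_neg hd h₁ h₂ (hθ x₁ h₁) (hgap x₁ x₂ h₁ h₂)),
      Real.sign_of_neg (penalized_sub_penalized_neg hd' h₁ h₂ (hθ x₁ h₁) (hgap x₁ x₂ h₁ h₂))]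
  · rw [← neg_sub, Real.sign_neg, ← neg_sub (penalized f ϑ θ c d' x₂), Real.sign_neg,
      Real.sign_of_neg (penalized_sub_penalized_neg hd h₂ h₁ (hθ x₂ h₂) (hgap x₂ x₁ h₂ h₁)),
      Real.sign_of_neg (penalized_sub_penalized_neg hd' h₂ h₁ (hθ x₂ h₂) (hgap x₂ x₁ h₂ h₁))]
  · rw [penalized_sub_penalized_of_iff (iff_of_false h₁ h₂)]

end penalized

theorem stmt_10_general {S : Type*} (f ϑ : S → ℝ) (fb fl tb ξ fh gh : ℝ)
    (hf : fl < fb) (htb : 0 < tb) (hξ0 : 0 < ξ) (hξ1 : ξ ≤ 1)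
    (hfh : 0 < fh) (hgh : 0 < gh) (hratio : fh * tb = gh * (fb - fl))
    (hflo : ∀ x, fl ≤ f x) (hfhi : ∀ x, f x ≤ fb)
    (hlo : ∀ x, 0 ≤ ϑ x)
    (θ π πh : S → ℝ)
    (hθ : ∀ x, θ x = if ϑ x = 0 then -tb else ϑ x)
    (hπ : ∀ x, π x = -(f x + ((if 0 < ϑ x then fb - fl else 0) + ((fb - fl) / (ξ * tb)) * θ x)))
    (hπh : ∀ x, πh x = -(f x + ((if 0 < ϑ x then fh else 0) + (fh / (ξ * gh)) * θ x))) :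
    ∀ x₁ x₂ : S, Real.sign (πh x₁ - πh x₂) = Real.sign (π x₁ - π x₂) := by
  set c := (fb - fl) / (ξ * tb)
  have hslope : fh / (ξ * gh) = c := by
    rw [div_eq_div_iff (by positivity) (by positivity)]
    linear_combination ξ * hratio
  have hc : 0 < c := div_pos (by linarith) (by positivity)
  have hctb : fb - fl ≤ c * tb := by
    calc fb - fl ≤ (fb - fl) / ξ := le_div_self (by linarith) hξ0 hξ1
      _ = c * tb := by simp only [c]; field_simp
  have hθpos (x) (hx : 0 < ϑ x) : 0 < c * θ x := by
    rw [hθ, if_neg hx.ne']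
    positivity
  have hgap (x y) (hx : 0 < ϑ x) (hy : ¬ 0 < ϑ y) : f y + c * θ y ≤ f x := by
    rw [hθ, if_pos (le_antisymm (not_lt.mp hy) (hlo y))]
    linarith [hflo x, hfhi y]
  obtain rfl : π = penalized f ϑ θ c (fb - fl) := funext hπ
  obtain rfl : πh = penalized f ϑ θ c fh := by rw [← hslope]; exact funext hπh
  exact sign_penalized_sub_eq hfh.le (by linarith) hθpos hgap

theorem stmt_10 {S : Type*} (f ϑ : S → ℝ) (fb fl tb ξ fh gh : ℝ)
    (hf : fl < fb) (htb : 0 < tb) (hξ0 : 0 < ξ) (hξ1 : ξ ≤ 1)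
    (hfh : 0 < fh) (hgh : 0 < gh) (hratio : fh * tb = gh * (fb - fl))
    (hflo : ∀ x, fl ≤ f x) (hfhi : ∀ x, f x ≤ fb)
    (hlo : ∀ x, 0 ≤ ϑ x) (hhi : ∀ x, ϑ x ≤ tb)
    (θ π πh : S → ℝ)
    (hθ : ∀ x, θ x = if ϑ x = 0 then -tb else ϑ x)
    (hπ : ∀ x, π x = -(f x + ((if 0 < ϑ x then fb - fl else 0) + ((fb - fl) / (ξ * tb)) * θ x)))
    (hπh : ∀ x, πh x = -(f x + ((if 0 < ϑ x then fh else 0) + (fh / (ξ * gh)) * θ x))) :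
    ∀ x₁ x₂ : S, Real.sign (πh x₁ - πh x₂) = Real.sign (π x₁ - π x₂) :=
  stmt_10_general f ϑ fb fl tb ξ fh gh hf htb hξ0 hξ1 hfh hgh hratio hflo hfhi hlo θ π πh hθ hπ hπh
end

section
/- Relaxed feasible-vs-infeasible dominance: let f̂ > 0 and ĝ > 0 satisfy f̂/ĝ ≥ (f̄ - f_)/ϑ̄, and define π̂(x) = -(f(x) + 1{ϑ(x)>0}·f̂ + (f̂/(ξ·ĝ))·θ(x)) with θ(x) = -ϑ̄ if ϑ(x)=0 else ϑ(x) and 0 < ξ ≤ 1. If x₁ is feasible and x₂ is infeasible (with f_ ≤ f(x₁), f(x₂) ≤ f̄), then π̂(x₁) > π̂(x₂). -/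
theorem stmt_11 {S : Type*} (f ϑ : S → ℝ) (fb fl tb ξ fh gh : ℝ)
    (hf : fl < fb) (htb : 0 < tb) (hξ0 : 0 < ξ) (hξ1 : ξ ≤ 1)
    (hfh : 0 < fh) (hgh : 0 < gh) (hratio : fh * tb ≥ gh * (fb - fl))
    (hlo : ∀ x, 0 ≤ ϑ x) (hhi : ∀ x, ϑ x ≤ tb)
    (θ πh : S → ℝ)
    (hθ : ∀ x, θ x = if ϑ x = 0 then -tb else ϑ x)
    (hπh : ∀ x, πh x = -(f x + ((if 0 < ϑ x then fh else 0) + (fh / (ξ * gh)) * θ x)))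
    (x₁ x₂ : S) (h1 : ϑ x₁ = 0) (h2 : 0 < ϑ x₂)
    (hb1 : fl ≤ f x₁ ∧ f x₁ ≤ fb) (hb2 : fl ≤ f x₂ ∧ f x₂ ≤ fb) :
    πh x₁ > πh x₂ := by
  have hne : ϑ x₂ ≠ 0 := ne_of_gt h2
  rw [hπh x₁, hπh x₂, hθ x₁, hθ x₂]
  simp only [h1, if_pos rfl, if_neg hne, lt_irrefl, if_neg (lt_irrefl 0), if_pos h2,
    ite_true, ite_false]
  have hξg : 0 < ξ * gh := mul_pos hξ0 hgh
  have hc : 0 < fh / (ξ * gh) := div_pos hfh hξg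
  -- key: fh/(ξ*gh) * tb ≥ fb - fl
  have hkey : fb - fl ≤ fh / (ξ * gh) * tb := by
    rw [div_mul_eq_mul_div, le_div_iff₀ hξg]
    have h3 : (fb - fl) * (ξ * gh) ≤ gh * (fb - fl) := by
      nlinarith [mul_nonneg (mul_nonneg hgh.le (sub_nonneg.mpr hf.le)) (sub_nonneg.mpr hξ1)]
    linarith [hratio]
  have hpos : 0 < fh + fh / (ξ * gh) * ϑ x₂ := by positivity
  nlinarith [hb1.1, hb1.2, hb2.1, hb2.2]
end

section
/- Strict advantage forces strict comparison despite maximal disadvantage on objective: with π as defined, if x₁ is feasible, x₂ is infeasible, and f(x₁) = f̄, f(x₂) = f_ (worst possible objective gap against x₁), then still π(x₁) - π(x₂) = -(f̄ - f_) + (f̄ - f_) + ((f̄ - f_)/(ξϑ̄))·(ϑ(x₂) + ϑ̄) > 0, i.e., feasibility always wins under π across the feasible/infeasible divide. -/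
theorem stmt_18 {S : Type*} (f ϑ : S → ℝ) (fb fl tb ξ : ℝ)
    (hf : fl < fb) (htb : 0 < tb) (hξ0 : 0 < ξ) (hξ1 : ξ ≤ 1)
    (hflo : ∀ x, fl ≤ f x) (hfhi : ∀ x, f x ≤ fb)
    (hlo : ∀ x, 0 ≤ ϑ x) (hhi : ∀ x, ϑ x ≤ tb)
    (θ σ π : S → ℝ)
    (hθ : ∀ x, θ x = if ϑ x = 0 then -tb else ϑ x)
    (hσ : ∀ x, σ x = (if 0 < ϑ x then fb - fl else 0) + ((fb - fl) / (ξ * tb)) * θ x)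
    (hπ : ∀ x, π x = -(f x + σ x))
    (x₁ x₂ : S) (h1 : ϑ x₁ = 0) (h2 : 0 < ϑ x₂)
    (hf1 : f x₁ = fb) (hf2 : f x₂ = fl) :
    π x₁ - π x₂ = -(fb - fl) + (fb - fl) + ((fb - fl) / (ξ * tb)) * (ϑ x₂ + tb) ∧
    π x₁ > π x₂ := by
  have h2' : ϑ x₂ ≠ 0 := ne_of_gt h2
  have heq : π x₁ - π x₂ = -(fb - fl) + (fb - fl) + ((fb - fl) / (ξ * tb)) * (ϑ x₂ + tb) := by
    rw [hπ, hπ, hσ, hσ, hθ, hθ, hf1, hf2, if_pos h1, if_neg h2', if_pos h2, h1]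
    have : ¬ (0:ℝ) < 0 := lt_irrefl 0
    rw [if_neg this]
    ring
  refine ⟨heq, ?_⟩
  have hpos : 0 < ((fb - fl) / (ξ * tb)) * (ϑ x₂ + tb) :=
    mul_pos (div_pos (by linarith) (mul_pos hξ0 htb)) (by linarith)
  have : 0 < π x₁ - π x₂ := by rw [heq]; linarith
  linarith
end
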